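/- Let J ≥ 4. Let A₀ be the J×J tridiagonal matrix with stencil (−1, 2, −1), i.e., (A₀)_{ii} = 2, (A₀)_{i,i±1} = −1, all other entries 0, and let B₀ be the J×J pentadiagonal matrix with stencil (1, −4, 6, −4, 1), i.e., (B₀)_{ii} = 6, (B₀)_{i,i±1} = −4, (B₀)_{i,i±2} = 1, all other entries 0. Then B₀ = A₀² + E, where E is the J×J matrix with E_{11} = E_{JJ} = 1 and all other entries 0. Consequently, for every x ∈ ℝ^J, ⟨B₀ x, x⟩ = ‖A₀ x‖₂² + x₁² + x_J² ≥ ‖A₀ x‖₂² ≥ ⟨A₀² x, x⟩. -/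

import Mathlib

/-!
With `S` the superdiagonal shift, `A₀ = 2 - S - Sᵀ` and `B₀ = 6 - 4S - 4Sᵀ + S² + (Sᵀ)²`,
while `A₀² = 4 - 4S - 4Sᵀ + S² + (Sᵀ)² + (SSᵀ + SᵀS)`. Now `SSᵀ` and `SᵀS` are the identity
with the last, resp. first, diagonal entry deleted, so `SSᵀ + SᵀS = 2 - E`, which gives
`B₀ = A₀² + E`. Since `A₀` is symmetric, `⟨A₀²x, x⟩ = ‖A₀x‖²`, and `⟨Ex, x⟩ = x₁² + x_J²`.
-/

/-- The `J×J` tridiagonal matrix with stencil `(−1, 2, −1)`. -/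
def A0 (J : ℕ) : Matrix (Fin J) (Fin J) ℝ :=
  Matrix.of fun i j =>
    if i = j then 2
    else if (i : ℕ) + 1 = (j : ℕ) ∨ (j : ℕ) + 1 = (i : ℕ) then -1
    else 0

/-- The `J×J` pentadiagonal matrix with stencil `(1, −4, 6, −4, 1)`. -/
def B0 (J : ℕ) : Matrix (Fin J) (Fin J) ℝ :=
  Matrix.of fun i j =>
    if i = j then 6
    else if (i : ℕ) + 1 = (j : ℕ) ∨ (j : ℕ) + 1 = (i : ℕ) then -4
    else if (i : ℕ) + 2 = (j : ℕ) ∨ (j : ℕ) + 2 = (i : ℕ) then 1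
    else 0

/-- The `J×J` matrix with `E_{11} = E_{JJ} = 1` and all other entries `0`. -/
def Ecorner (J : ℕ) : Matrix (Fin J) (Fin J) ℝ :=
  Matrix.of fun i j =>
    if i = j ∧ ((i : ℕ) = 0 ∨ (i : ℕ) = J - 1) then 1 else 0

open Matrix

section Shift

variable {R : Type*} [Semiring R] {J : ℕ}

theorem Fin.sum_ite_val_eq (n : ℕ) (f : Fin J → R) :
    ∑ k : Fin J, (if (k : ℕ) = n then f k else 0) = if h : n < J then f ⟨n, h⟩ else 0 := by
  split_ifs with h
  · simp [← Fin.ext_iff (b := ⟨n, h⟩)]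
  · exact Finset.sum_eq_zero fun k _ => if_neg (by omega)

variable (R J) in
def shiftMatrix : Matrix (Fin J) (Fin J) R :=
  of fun i j => if (i : ℕ) + 1 = j then 1 else 0

theorem shiftMatrix_mul_apply (M : Matrix (Fin J) (Fin J) R) (i j : Fin J) :
    (shiftMatrix R J * M) i j = if h : (i : ℕ) + 1 < J then M ⟨i + 1, h⟩ j else 0 := by
  simp only [mul_apply, shiftMatrix, of_apply, ite_mul, one_mul, zero_mul,
    eq_comm (a := (i : ℕ) + 1)]
  exact Fin.sum_ite_val_eq _ _

theorem mul_shiftMatrix_apply (M : Matrix (Fin J) (Fin J) R) (i j : Fin J) :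
    (M * shiftMatrix R J) i j = if h : 0 < (j : ℕ) then M i ⟨j - 1, by omega⟩ else 0 := by
  have hcond (k : Fin J) : (k : ℕ) + 1 = j ↔ 0 < (j : ℕ) ∧ (k : ℕ) = j - 1 := by omega
  simp only [mul_apply, shiftMatrix, of_apply, mul_ite, mul_one, mul_zero, hcond, ite_and]
  split_ifs with h
  · exact Fin.sum_ite_val_eq _ _ |>.trans (dif_pos (by omega))
  · exact Finset.sum_const_zero

theorem shiftMatrix_mul_shiftMatrix_apply (i j : Fin J) :
    (shiftMatrix R J * shiftMatrix R J) i j = if (i : ℕ) + 2 = j then 1 else 0 := by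
  rw [shiftMatrix_mul_apply]
  split_ifs <;> simp_all [shiftMatrix]; omega

theorem shiftMatrix_mul_transpose :
    shiftMatrix R J * (shiftMatrix R J)ᵀ =
      diagonal fun i : Fin J => if (i : ℕ) + 1 < J then 1 else 0 := by
  ext i j
  rw [shiftMatrix_mul_apply, diagonal_apply]
  split_ifs <;> simp_all [shiftMatrix, Fin.ext_iff]; omega

theorem transpose_shiftMatrix_mul :
    (shiftMatrix R J)ᵀ * shiftMatrix R J =
      diagonal fun i : Fin J => if 0 < (i : ℕ) then 1 else 0 := by
  ext i j
  rw [mul_shiftMatrix_apply, diagonal_apply]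
  split_ifs <;> simp_all [shiftMatrix, Fin.ext_iff] <;> omega

end Shift

theorem sq_two_sub_sub {A : Type*} [Ring A] (S T : A) :
    (2 - S - T) ^ 2 = 4 - 4 • S - 4 • T + S * S + T * T + (S * T + T * S) := by
  have h : (4 : A) = 2 * 2 := by norm_num
  simp only [h, sq, sub_mul, mul_sub, two_mul, mul_two]
  abel

theorem Matrix.IsSymm.sq_mulVec_dotProduct {n R : Type*} [Fintype n] [DecidableEq n]
    [CommSemiring R] {A : Matrix n n R} (hA : A.IsSymm) (x : n → R) :
    (A ^ 2 *ᵥ x) ⬝ᵥ x = (A *ᵥ x) ⬝ᵥ (A *ᵥ x) := by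
  rw [sq, ← mulVec_mulVec, dotProduct_comm, dotProduct_mulVec, ← mulVec_transpose, hA.eq]

theorem A0_eq_shiftMatrix (J : ℕ) : A0 J = 2 - shiftMatrix ℝ J - (shiftMatrix ℝ J)ᵀ := by
  ext i j
  simp only [A0, shiftMatrix, of_apply, Matrix.sub_apply, transpose_apply, ofNat_apply, Fin.ext_iff]
  split_ifs <;> norm_num <;> omega

theorem B0_eq_shiftMatrix (J : ℕ) :
    B0 J = 6 - 4 • shiftMatrix ℝ J - 4 • (shiftMatrix ℝ J)ᵀ
      + shiftMatrix ℝ J * shiftMatrix ℝ J + (shiftMatrix ℝ J)ᵀ * (shiftMatrix ℝ J)ᵀ := by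
  ext i j
  rw [← transpose_mul]
  simp only [Matrix.add_apply, Matrix.sub_apply, Matrix.smul_apply, transpose_apply,
    shiftMatrix_mul_shiftMatrix_apply]
  simp only [B0, shiftMatrix, of_apply, ofNat_apply, Fin.ext_iff]
  split_ifs <;> norm_num <;> omega

theorem Ecorner_eq_diagonal (J : ℕ) :
    Ecorner J = diagonal fun i : Fin J => if (i : ℕ) = 0 ∨ (i : ℕ) = J - 1 then 1 else 0 := by
  ext i j
  simp only [Ecorner, of_apply, diagonal_apply, ite_and]

theorem shiftMatrix_mul_transpose_add_transpose_mul_add_Ecorner {J : ℕ} (hJ : 2 ≤ J) :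
    shiftMatrix ℝ J * (shiftMatrix ℝ J)ᵀ + (shiftMatrix ℝ J)ᵀ * shiftMatrix ℝ J + Ecorner J =
      2 := by
  rw [shiftMatrix_mul_transpose, transpose_shiftMatrix_mul, Ecorner_eq_diagonal, diagonal_add,
    diagonal_add, ← diagonal_ofNat]
  congr 1
  ext i
  have := i.isLt
  split_ifs <;> norm_num <;> omega

theorem B0_eq_A0_sq_add_Ecorner {J : ℕ} (hJ : 2 ≤ J) : B0 J = A0 J ^ 2 + Ecorner J := by
  have h6 : (6 : Matrix (Fin J) (Fin J) ℝ) = 4 + 2 := by norm_num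
  rw [B0_eq_shiftMatrix, A0_eq_shiftMatrix, sq_two_sub_sub, h6,
    ← shiftMatrix_mul_transpose_add_transpose_mul_add_Ecorner hJ]
  abel

theorem A0_isSymm (J : ℕ) : (A0 J).IsSymm := by
  ext i j
  simp only [transpose_apply, A0, of_apply, Fin.ext_iff]
  split_ifs <;> first | rfl | omega

theorem Ecorner_mulVec_dotProduct {J : ℕ} (hJ : 2 ≤ J) (x : Fin J → ℝ) :
    (Ecorner J *ᵥ x) ⬝ᵥ x = x ⟨0, by omega⟩ ^ 2 + x ⟨J - 1, by omega⟩ ^ 2 := by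
  rw [Ecorner_eq_diagonal, dotProduct, Fintype.sum_eq_add ⟨0, by omega⟩ ⟨J - 1, by omega⟩]
  · simp [mulVec_diagonal, sq]
  · simp only [ne_eq, Fin.ext_iff]
    omega
  · rintro i ⟨h0, hlast⟩
    simp_all [mulVec_diagonal, Fin.ext_iff]

/-- `B₀ = A₀² + E` and consequently
`⟨B₀x, x⟩ = ‖A₀x‖₂² + x₁² + x_J² ≥ ‖A₀x‖₂² ≥ ⟨A₀²x, x⟩`. -/
theorem pentadiagonal_eq_square_tridiagonal (J : ℕ) (hJ : 4 ≤ J) :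
    B0 J = (A0 J)^2 + Ecorner J ∧
    ∀ x : Fin J → ℝ,
      (∑ i, (B0 J).mulVec x i * x i
        = ∑ i, ((A0 J).mulVec x i)^2 + (x ⟨0, by omega⟩)^2 + (x ⟨J - 1, by omega⟩)^2) ∧
      (∑ i, ((A0 J).mulVec x i)^2 ≤ ∑ i, (B0 J).mulVec x i * x i) ∧
      (∑ i, ((A0 J)^2).mulVec x i * x i ≤ ∑ i, ((A0 J).mulVec x i)^2) := by
  have hB := B0_eq_A0_sq_add_Ecorner (by omega : 2 ≤ J)
  refine ⟨hB, fun x => ?_⟩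
  have hnorm : ∑ i, (A0 J *ᵥ x) i ^ 2 = (A0 J *ᵥ x) ⬝ᵥ (A0 J *ᵥ x) := by
    simp only [dotProduct, sq]
  have hform : (B0 J *ᵥ x) ⬝ᵥ x
      = (A0 J *ᵥ x) ⬝ᵥ (A0 J *ᵥ x) + x ⟨0, by omega⟩ ^ 2 + x ⟨J - 1, by omega⟩ ^ 2 := by
    rw [hB, add_mulVec, add_dotProduct, (A0_isSymm J).sq_mulVec_dotProduct,
      Ecorner_mulVec_dotProduct (by omega), add_assoc]
  change (B0 J *ᵥ x) ⬝ᵥ x = _ ∧ _ ≤ (B0 J *ᵥ x) ⬝ᵥ x ∧ (A0 J ^ 2 *ᵥ x) ⬝ᵥ x ≤ _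
  rw [hnorm, hform, (A0_isSymm J).sq_mulVec_dotProduct]
  exact ⟨rfl, le_add_of_le_of_nonneg (le_add_of_nonneg_right (sq_nonneg _)) (sq_nonneg _), le_rfl⟩
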